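/- arXiv:2408.10626 — 3 statements merged into one kernel-verified Lean document; each statement's English description precedes it below -/
import Mathlib

section
/- For any β-set B and every i ∈ ℤ/eℤ, δ_i(B) = δ_i(core_e(B)); that is, the e-hub (δ_0(B), …, δ_{e−1}(B)) of B equals the e-hub of its e-core. -/
/-- A β-set: a subset of ℤ having a maximum element, whose complement has a minimum element. -/
def IsBetaSet (B : Set ℤ) : Prop :=
  (∃ m ∈ B, ∀ x ∈ B, x ≤ m) ∧ (∃ m, m ∉ B ∧ ∀ x, x ∉ B → m ≤ x)

/-- The charge s(B) = |B ∩ ℤ≥0| − |ℤ<0 ∖ B| of a β-set. -/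
noncomputable def charge (B : Set ℤ) : ℤ :=
  ((B ∩ {x : ℤ | 0 ≤ x}).ncard : ℤ) - (({x : ℤ | x < 0} \ B).ncard : ℤ)

/-- B^{+k} = {x + k : x ∈ B}. -/
def shiftSet (B : Set ℤ) (k : ℤ) : Set ℤ := (fun x => x + k) '' B

/-- δ_i(B) for i ∈ ℤ/eℤ. -/
noncomputable def deltaOf (e : ℕ) (i : ZMod e) (B : Set ℤ) : ℤ :=
  ({x : ℤ | x ∈ B ∧ (x : ZMod e) = i ∧ x - 1 ∉ B}.ncard : ℤ)
    - ({x : ℤ | x ∈ B ∧ (x : ZMod e) = i - 1 ∧ x + 1 ∉ B}.ncard : ℤ)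

/-- The i-th component B_i = {a : ae + i ∈ B} of the e-quotient of B. -/
def quotComp (e : ℕ) (B : Set ℤ) (i : ℕ) : Set ℤ :=
  {a : ℤ | a * (e : ℤ) + (i : ℤ) ∈ B}

/-- The e-core of B: ⋃_{i<e} {ae + i : a < s(B_i)}. -/
noncomputable def coreSet (e : ℕ) (B : Set ℤ) : Set ℤ :=
  {x : ℤ | ∃ i < e, ∃ a : ℤ, a < charge (quotComp e B i) ∧ x = a * (e : ℤ) + (i : ℤ)}

/-- The e-weight of B: for each quotient component C = B_i, the a-th term
b_{ia} − s(C) + a equals the number of y ∉ C below the a-th bead b_{ia}, so the inner sum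
counts the pairs (x, y) with x ∈ C, y ∉ C, y < x. -/
noncomputable def wtSet (e : ℕ) (B : Set ℤ) : ℕ :=
  ∑ i ∈ Finset.range e,
    {p : ℤ × ℤ | p.1 ∈ quotComp e B i ∧ p.2 ∉ quotComp e B i ∧ p.2 < p.1}.ncard

/-- υ_j(ae + b) = aeℓ + (ℓ−j)e + b. -/
def upsilon (e ℓ j : ℕ) (x : ℤ) : ℤ :=
  (x - x % (e : ℤ)) * (ℓ : ℤ) + ((ℓ : ℤ) - (j : ℤ)) * (e : ℤ) + x % (e : ℤ)

/-- The Uglov map U(B^{(1)}, …, B^{(ℓ)}) = ⋃_j υ_j(B^{(j)}) (the j-th component of the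
tuple, indexed by Fin ℓ, is B^{(j+1)} of the paper). -/
def uglovU (e ℓ : ℕ) (B : Fin ℓ → Set ℤ) : Set ℤ :=
  ⋃ j : Fin ℓ, upsilon e ℓ (j.1 + 1) '' (B j)

/-- A partition, as a weakly decreasing eventually-zero function ℕ → ℕ
(the value at a being λ_{a+1}). -/
def IsPartitionFun (p : ℕ → ℕ) : Prop :=
  (∀ a b : ℕ, a ≤ b → p b ≤ p a) ∧ ∃ N, ∀ n, N ≤ n → p n = 0

/-- β_t(λ) = {λ_a + t − a : a ≥ 1}. -/
def betaOf (p : ℕ → ℕ) (t : ℤ) : Set ℤ :=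
  {x : ℤ | ∃ a : ℕ, x = (p a : ℤ) + t - ((a : ℤ) + 1)}

-- β⁻¹(B): the unique partition λ with β_{s(B)}(λ) = B (junk value if none exists).
open Classical in
noncomputable def betaInv (B : Set ℤ) : ℕ → ℕ :=
  if h : ∃ p : ℕ → ℕ, IsPartitionFun p ∧ betaOf p (charge B) = B then h.choose
  else fun _ => 0

/-- U(β_t(λ)) for an ℓ-partition λ and multicharge t. -/
def uglovMulti (e ℓ : ℕ) (Λ : Fin ℓ → ℕ → ℕ) (t : Fin ℓ → ℤ) : Set ℤ :=
  uglovU e ℓ (fun j => betaOf (Λ j) (t j))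

/-- U(λ; t) = β⁻¹(U(β_t(λ))). -/
noncomputable def uglovPart (e ℓ : ℕ) (Λ : Fin ℓ → ℕ → ℕ) (t : Fin ℓ → ℤ) : ℕ → ℕ :=
  betaInv (uglovMulti e ℓ Λ t)

/-- core_e(λ; t) = β⁻¹(core_e(U(β_t(λ)))). -/
noncomputable def corePart (e ℓ : ℕ) (Λ : Fin ℓ → ℕ → ℕ) (t : Fin ℓ → ℤ) : ℕ → ℕ :=
  betaInv (coreSet e (uglovMulti e ℓ Λ t))

/-- wt_e(λ; t) = wt_e(U(β_t(λ))). -/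
noncomputable def wtPart (e ℓ : ℕ) (Λ : Fin ℓ → ℕ → ℕ) (t : Fin ℓ → ℤ) : ℕ :=
  wtSet e (uglovMulti e ℓ Λ t)

/-- t ∈ Ā_e^ℓ : t is weakly increasing with last entry at most first entry + e. -/
def memAbar (e : ℕ) {ℓ : ℕ} (t : Fin ℓ → ℤ) : Prop :=
  Monotone t ∧ ∀ i j : Fin ℓ, t j ≤ t i + (e : ℤ)

/-- t ∈ A_e^ℓ : t is weakly increasing with last entry at most first entry + e − 1. -/
def memA (e : ℕ) {ℓ : ℕ} (t : Fin ℓ → ℤ) : Prop :=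
  Monotone t ∧ ∀ i j : Fin ℓ, t j ≤ t i + (e : ℤ) - 1

/-- δ_i^t(λ) = Σ_j δ_i(β_{t_j}(λ^{(j)})). -/
noncomputable def deltaMulti (e ℓ : ℕ) (Λ : Fin ℓ → ℕ → ℕ) (t : Fin ℓ → ℤ) (i : ZMod e) : ℤ :=
  ∑ j : Fin ℓ, deltaOf e i (betaOf (Λ j) (t j))

/-- The Young diagram [λ] of an ℓ-partition, as a set of nodes (a, b, j). -/
def youngSet (ℓ : ℕ) (Λ : Fin ℓ → ℕ → ℕ) : Set (ℕ × ℕ × Fin ℓ) :=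
  {x | 1 ≤ x.1 ∧ 1 ≤ x.2.1 ∧ x.2.1 ≤ Λ x.2.2 (x.1 - 1)}

/-- The multiplicity of i ∈ ℤ/eℤ in the residue multiset res_e^t(λ). -/
noncomputable def resCount (e ℓ : ℕ) (Λ : Fin ℓ → ℕ → ℕ) (t : Fin ℓ → ℤ) (i : ZMod e) : ℕ :=
  {x : ℕ × ℕ × Fin ℓ | x ∈ youngSet ℓ Λ ∧
    (((x.2.1 : ℤ) - (x.1 : ℤ) + t x.2.2 : ℤ) : ZMod e) = i}.ncard

/-- The set of e-weights over the Ŵ_ℓ-orbit of (λ; t). -/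
noncomputable def orbitWeights (e ℓ : ℕ) (Λ : Fin ℓ → ℕ → ℕ) (t : Fin ℓ → ℤ) : Set ℕ :=
  {n : ℕ | ∃ σ : Equiv.Perm (Fin ℓ), ∃ v : Fin ℓ → ℤ,
    n = wtPart e ℓ (fun j => Λ (σ j)) (fun j => t (σ j) + (e : ℤ) * v j)}

/-! Write `S_t(B) = {a : ae + t ∈ B}` for `t ∈ ℤ`, so that `S_i(B) = B_i` for `0 ≤ i < e` and
`S_{t+qe}(B)` is `S_t(B)` translated by `-q`. The points counted by `δ_t(B)` are the images of
`S_t(B) ∖ S_{t-1}(B)` and `S_{t-1}(B) ∖ S_t(B)`, and for β-sets `X, Y` one has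
`|X ∖ Y| - |Y ∖ X| = s(X) - s(Y)`; hence `δ_t(B) = s(S_t(B)) - s(S_{t-1}(B))`. As translating by
`q` lowers the charge by `q`, each `s(S_t(B))` is determined by `t` and the charges `s(B_i)`,
which `core_e(B)` shares with `B` by construction. -/

open Set

lemma Int.ncard_Ico_of_le {m n : ℤ} (h : m ≤ n) : ((Ico m n).ncard : ℤ) = n - m := by
  rw [← Finset.coe_Ico, ncard_coe_finset, Int.card_Ico_of_le _ _ h]

lemma BddAbove.finite_inter_Ici {X : Set ℤ} (hX : BddAbove X) (m : ℤ) :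
    (X ∩ Ici m).Finite := by
  obtain ⟨M, hM⟩ := hX
  exact (finite_Icc m M).subset fun x hx => ⟨hx.2, hM hx.1⟩

section charge

variable {X Y : Set ℤ}

lemma exists_Iio_subset_of_bddBelow_compl (hXc : BddBelow Xᶜ) : ∃ m, Iio m ⊆ X := by
  obtain ⟨m, hm⟩ := hXc
  exact ⟨m, fun x hx => by_contra fun h => not_le.2 hx (hm h)⟩

lemma charge_def : charge X = (X ∩ Ici 0).ncard - (Iio 0 \ X).ncard := rfl

lemma ncard_inter_Ici_add_eq (hX : BddAbove X) {m m' : ℤ} (hmm' : m ≤ m')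
    (hm' : Iio m' ⊆ X) : ((X ∩ Ici m).ncard : ℤ) + m = (X ∩ Ici m').ncard + m' := by
  have hsplit : X ∩ Ici m = Ico m m' ∪ (X ∩ Ici m') := by
    ext x
    simp only [mem_inter_iff, mem_Ici, mem_union, mem_Ico]
    constructor
    · rintro ⟨hx, hmx⟩
      rcases lt_or_ge x m' with h | h
      exacts [.inl ⟨hmx, h⟩, .inr ⟨hx, h⟩]
    · rintro (⟨hmx, hx⟩ | ⟨hx, hx'⟩)
      exacts [⟨hm' hx, hmx⟩, ⟨hx, hmm'.trans hx'⟩]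
  have hdisj : Disjoint (Ico m m') (X ∩ Ici m') :=
    disjoint_left.2 fun x hx hx' => (not_le.2 hx.2) hx'.2
  rw [hsplit, ncard_union_eq hdisj (finite_Ico m m') (hX.finite_inter_Ici m'),
    Nat.cast_add, Int.ncard_Ico_of_le hmm']
  ring

lemma charge_eq_ncard_inter_Ici_add_of_nonpos (hX : BddAbove X) {m : ℤ} (hm : Iio m ⊆ X)
    (hm0 : m ≤ 0) : charge X = (X ∩ Ici m).ncard + m := by
  have hneg : Iio 0 \ X = Ico m 0 \ X := by
    ext x
    simp only [mem_sdiff, mem_Iio, mem_Ico]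
    exact ⟨fun ⟨hx, hxX⟩ => ⟨⟨not_lt.1 fun h => hxX (hm h), hx⟩, hxX⟩,
      fun ⟨hx, hxX⟩ => ⟨hx.2, hxX⟩⟩
  have hsplit : X ∩ Ici m = (Ico m 0 ∩ X) ∪ (X ∩ Ici 0) := by
    ext x
    simp only [mem_inter_iff, mem_Ici, mem_union, mem_Ico]
    constructor
    · rintro ⟨hx, hmx⟩
      rcases lt_or_ge x 0 with h | h
      exacts [.inl ⟨⟨hmx, h⟩, hx⟩, .inr ⟨hx, h⟩]
    · rintro (⟨⟨hmx, _⟩, hx⟩ | ⟨hx, h⟩)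
      exacts [⟨hx, hmx⟩, ⟨hx, hm0.trans h⟩]
  have hdisj : Disjoint (Ico m 0 ∩ X) (X ∩ Ici 0) :=
    disjoint_left.2 fun x hx hx' => (not_le.2 hx.1.2) hx'.2
  have hcount := ncard_inter_add_ncard_sdiff_eq_ncard (Ico m 0) X (finite_Ico m 0)
  have hIco := Int.ncard_Ico_of_le hm0
  rw [charge_def, hneg, hsplit, ncard_union_eq hdisj ((finite_Ico m 0).inter_of_left X)
    (hX.finite_inter_Ici 0)]
  omega

lemma charge_eq_ncard_inter_Ici_add (hX : BddAbove X) {m : ℤ} (hm : Iio m ⊆ X) :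
    charge X = (X ∩ Ici m).ncard + m := by
  rw [charge_eq_ncard_inter_Ici_add_of_nonpos hX
    ((Iio_subset_Iio (min_le_left m 0)).trans hm) (min_le_right m 0)]
  exact ncard_inter_Ici_add_eq hX (min_le_left m 0) hm

lemma charge_Iio (c : ℤ) : charge (Iio c) = c := by
  simp [charge_eq_ncard_inter_Ici_add bddAbove_Iio subset_rfl, Iio_inter_Ici]

lemma charge_preimage_add (hX : BddAbove X) (hXc : BddBelow Xᶜ) (q : ℤ) :
    charge ((· + q) ⁻¹' X) = charge X - q := by
  obtain ⟨m, hm⟩ := exists_Iio_subset_of_bddBelow_compl hXc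
  obtain ⟨M, hM⟩ := hX
  have hX' : BddAbove ((· + q) ⁻¹' X) := ⟨M - q, fun x hx => by linarith [hM hx]⟩
  have hm' : Iio (m - q) ⊆ (· + q) ⁻¹' X := fun x hx => hm (by simp at hx ⊢; linarith)
  have hpre : (· + q) ⁻¹' X ∩ Ici (m - q) = (· + q) ⁻¹' (X ∩ Ici m) := by
    ext x
    simp
  rw [charge_eq_ncard_inter_Ici_add hX' hm', charge_eq_ncard_inter_Ici_add ⟨M, hM⟩ hm, hpre,
    ncard_preimage_of_injective_subset_range (add_left_injective q)
      (by simp [(add_right_surjective q).range_eq])]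
  ring

lemma ncard_sdiff_sub_ncard_sdiff (hX : BddAbove X) (hXc : BddBelow Xᶜ) (hY : BddAbove Y)
    (hYc : BddBelow Yᶜ) : ((X \ Y).ncard : ℤ) - (Y \ X).ncard = charge X - charge Y := by
  obtain ⟨mX, hmX⟩ := exists_Iio_subset_of_bddBelow_compl hXc
  obtain ⟨mY, hmY⟩ := exists_Iio_subset_of_bddBelow_compl hYc
  set m := min mX mY
  have hmX' : Iio m ⊆ X := (Iio_subset_Iio (min_le_left _ _)).trans hmX
  have hmY' : Iio m ⊆ Y := (Iio_subset_Iio (min_le_right _ _)).trans hmY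
  have htrunc : ∀ {Z W : Set ℤ}, Iio m ⊆ W → Z \ W = (Z ∩ Ici m) \ (W ∩ Ici m) := by
    intro Z W hW
    ext x
    simp only [mem_sdiff, mem_inter_iff, mem_Ici, not_and]
    exact ⟨fun ⟨hZ, hW'⟩ => ⟨⟨hZ, not_lt.1 fun h => hW' (hW h)⟩, fun h _ => hW' h⟩,
      fun ⟨⟨hZ, hmx⟩, hW'⟩ => ⟨hZ, fun h => hW' h hmx⟩⟩
  have hXY := ncard_inter_add_ncard_sdiff_eq_ncard _ (Y ∩ Ici m) (hX.finite_inter_Ici m)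
  have hYX := ncard_inter_add_ncard_sdiff_eq_ncard _ (X ∩ Ici m) (hY.finite_inter_Ici m)
  rw [inter_comm (Y ∩ Ici m)] at hYX
  rw [htrunc hmY', htrunc hmX', charge_eq_ncard_inter_Ici_add hX hmX',
    charge_eq_ncard_inter_Ici_add hY hmY']
  omega

end charge

lemma IsBetaSet.bddAbove {B : Set ℤ} (hB : IsBetaSet B) : BddAbove B :=
  let ⟨⟨M, _, hM⟩, _⟩ := hB
  ⟨M, hM⟩

lemma IsBetaSet.bddBelow_compl {B : Set ℤ} (hB : IsBetaSet B) : BddBelow Bᶜ :=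
  let ⟨_, ⟨m, _, hm⟩⟩ := hB
  ⟨m, hm⟩

lemma ZMod.intCast_eq_intCast_iff_exists {e : ℕ} (x t : ℤ) :
    (x : ZMod e) = t ↔ ∃ a : ℤ, a * e + t = x := by
  rw [ZMod.intCast_eq_intCast_iff_dvd_sub]
  constructor
  · rintro ⟨c, hc⟩
    exact ⟨-c, by linarith⟩
  · rintro ⟨a, rfl⟩
    exact ⟨-a, by ring⟩

def residueSlice (e : ℕ) (B : Set ℤ) (t : ℤ) : Set ℤ := {a : ℤ | a * e + t ∈ B}

section residueSlice

variable {e : ℕ} {B : Set ℤ}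

lemma toNat_emod_eq (he : 0 < e) (t : ℤ) : (((t % e).toNat : ℕ) : ℤ) = t % e :=
  Int.toNat_of_nonneg (Int.emod_nonneg t (by exact_mod_cast he.ne'))

lemma toNat_emod_lt (he : 0 < e) (t : ℤ) : (t % e).toNat < e := by
  have := Int.emod_lt_of_pos t (by exact_mod_cast he : (0 : ℤ) < e)
  have := toNat_emod_eq he t
  omega

lemma bddAbove_residueSlice (he : 0 < e) (hB : BddAbove B) (t : ℤ) :
    BddAbove (residueSlice e B t) := by
  obtain ⟨M, hM⟩ := hB
  refine ⟨max (M - t) 0, fun a ha => ?_⟩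
  have hae : a * e + t ≤ M := hM ha
  have he' : (1 : ℤ) ≤ e := by exact_mod_cast he
  by_contra h
  nlinarith [le_max_left (M - t) 0, le_max_right (M - t) 0]

lemma bddBelow_compl_residueSlice (he : 0 < e) (hBc : BddBelow Bᶜ) (t : ℤ) :
    BddBelow (residueSlice e B t)ᶜ := by
  obtain ⟨m, hm⟩ := hBc
  refine ⟨min (m - t) 0, fun a ha => ?_⟩
  have hae : m ≤ a * e + t := hm ha
  have he' : (1 : ℤ) ≤ e := by exact_mod_cast he
  by_contra h
  nlinarith [min_le_left (m - t) 0, min_le_right (m - t) 0]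

lemma residueSlice_add_mul (t q : ℤ) :
    residueSlice e B (t + q * e) = (· + q) ⁻¹' residueSlice e B t := by
  ext a
  show a * e + (t + q * e) ∈ B ↔ (a + q) * e + t ∈ B
  rw [show a * e + (t + q * e) = (a + q) * e + t by ring]

lemma charge_residueSlice (he : 0 < e) (hB : BddAbove B) (hBc : BddBelow Bᶜ) (t : ℤ) :
    charge (residueSlice e B t) = charge (quotComp e B (t % e).toNat) - t / e := by
  conv_lhs => rw [← Int.emod_add_ediv_mul t e, ← toNat_emod_eq he t, residueSlice_add_mul]
  exact charge_preimage_add (bddAbove_residueSlice he hB _)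
    (bddBelow_compl_residueSlice he hBc _) _

lemma setOf_boundary_eq_image (t u : ℤ) :
    {x : ℤ | x ∈ B ∧ (x : ZMod e) = t ∧ x + u ∉ B}
      = (fun a : ℤ => a * e + t) '' (residueSlice e B t \ residueSlice e B (t + u)) := by
  ext x
  simp only [mem_ofPred_eq, mem_image, mem_sdiff, residueSlice,
    ZMod.intCast_eq_intCast_iff_exists]
  constructor
  · rintro ⟨hx, ⟨a, rfl⟩, hxu⟩
    exact ⟨a, ⟨hx, by rwa [← add_assoc]⟩, rfl⟩
  · rintro ⟨a, ⟨ha, hau⟩, rfl⟩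
    exact ⟨ha, ⟨a, rfl⟩, by rwa [add_assoc]⟩

lemma deltaOf_intCast (he : 0 < e) (t : ℤ) :
    deltaOf e t B = ((residueSlice e B t \ residueSlice e B (t - 1)).ncard : ℤ)
      - (residueSlice e B (t - 1) \ residueSlice e B t).ncard := by
  have hinj : ∀ s : ℤ, Function.Injective fun a : ℤ => a * e + s := fun s =>
    (add_left_injective s).comp (mul_left_injective₀ (by exact_mod_cast he.ne'))
  have hup := setOf_boundary_eq_image (B := B) (e := e) t (-1)
  have hdown := setOf_boundary_eq_image (B := B) (e := e) (t - 1) 1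
  simp_rw [← sub_eq_add_neg] at hup
  rw [sub_add_cancel, Int.cast_sub, Int.cast_one] at hdown
  rw [deltaOf, hup, hdown, ncard_image_of_injective _ (hinj _), ncard_image_of_injective _ (hinj _)]

lemma deltaOf_intCast_eq_charge_sub (he : 0 < e) (hB : BddAbove B) (hBc : BddBelow Bᶜ) (t : ℤ) :
    deltaOf e t B = charge (residueSlice e B t) - charge (residueSlice e B (t - 1)) := by
  rw [deltaOf_intCast he, ncard_sdiff_sub_ncard_sdiff (bddAbove_residueSlice he hB _)
    (bddBelow_compl_residueSlice he hBc _) (bddAbove_residueSlice he hB _)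
    (bddBelow_compl_residueSlice he hBc _)]

end residueSlice

section coreSet

variable {e : ℕ} {B : Set ℤ}

lemma mem_coreSet_iff (he : 0 < e) (x : ℤ) :
    x ∈ coreSet e B ↔ x / e < charge (quotComp e B (x % e).toNat) := by
  have he' : (0 : ℤ) < e := by exact_mod_cast he
  constructor
  · rintro ⟨i, hi, a, ha, rfl⟩
    obtain ⟨hq, hr⟩ := (Int.ediv_emod_unique (a := a * e + i) (r := i) (q := a) he').2
      ⟨by ring, by positivity, by exact_mod_cast hi⟩
    rwa [hq, hr, Int.toNat_natCast]
  · intro hx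
    refine ⟨(x % e).toNat, toNat_emod_lt he x, x / e, hx, ?_⟩
    rw [toNat_emod_eq he, add_comm, Int.emod_add_ediv_mul]

lemma bddAbove_coreSet (he : 0 < e) : BddAbove (coreSet e B) := by
  obtain ⟨M, hM⟩ := ((finite_Iio e).image fun r => charge (quotComp e B r)).bddAbove
  refine ⟨M * e, fun x hx => ?_⟩
  rw [mem_coreSet_iff he] at hx
  have hM' := hM (mem_image_of_mem _ (toNat_emod_lt he x))
  exact ((Int.ediv_lt_iff_lt_mul (by exact_mod_cast he)).1 (hx.trans_le hM')).le

lemma bddBelow_compl_coreSet (he : 0 < e) : BddBelow (coreSet e B)ᶜ := by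
  obtain ⟨m, hm⟩ := ((finite_Iio e).image fun r => charge (quotComp e B r)).bddBelow
  refine ⟨m * e, fun x hx => ?_⟩
  rw [mem_compl_iff, mem_coreSet_iff he, not_lt] at hx
  have hm' := hm (mem_image_of_mem _ (toNat_emod_lt he x))
  exact (Int.le_ediv_iff_mul_le (by exact_mod_cast he)).1 (hm'.trans hx)

lemma residueSlice_coreSet (he : 0 < e) (t : ℤ) :
    residueSlice e (coreSet e B) t = Iio (charge (quotComp e B (t % e).toNat) - t / e) := by
  have he' : (e : ℤ) ≠ 0 := by exact_mod_cast he.ne'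
  ext a
  rw [residueSlice, mem_ofPred_eq, mem_coreSet_iff he, add_comm, Int.add_mul_ediv_right _ _ he',
    Int.add_mul_emod_self_right, mem_Iio]
  omega

lemma charge_residueSlice_coreSet (he : 0 < e) (hB : BddAbove B) (hBc : BddBelow Bᶜ) (t : ℤ) :
    charge (residueSlice e (coreSet e B) t) = charge (residueSlice e B t) := by
  rw [residueSlice_coreSet he, charge_Iio, charge_residueSlice he hB hBc]

end coreSet

/-- δ_i(B) = δ_i(core_e(B)) for every i ∈ ℤ/eℤ; i.e. the e-hub of B equals
the e-hub of its e-core. -/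
theorem stmt3 (e : ℕ) (he : 2 ≤ e) (B : Set ℤ) (hB : IsBetaSet B) (i : ZMod e) :
    deltaOf e i B = deltaOf e i (coreSet e B) := by
  have he0 : 0 < e := by omega
  obtain ⟨t, rfl⟩ := ZMod.intCast_surjective i
  rw [deltaOf_intCast_eq_charge_sub he0 hB.bddAbove hB.bddBelow_compl,
    deltaOf_intCast_eq_charge_sub he0 (bddAbove_coreSet he0) (bddBelow_compl_coreSet he0),
    charge_residueSlice_coreSet he0 hB.bddAbove hB.bddBelow_compl,
    charge_residueSlice_coreSet he0 hB.bddAbove hB.bddBelow_compl]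
end

section
/- Assume ℓ ≥ 2. For every ℓ-partition λ = (λ^{(1)}, …, λ^{(ℓ)}) and every multicharge t = (t_1, …, t_ℓ) ∈ ℤ^ℓ, U((λ^{(2)}, …, λ^{(ℓ)}, λ^{(1)}); (t_2, …, t_ℓ, t_1 + e)) = U(λ; t). -/
/-! Rotating the components one step to the left lowers the index `j` of `υ_j` on the
components that move, and `υ_j(x) = υ_{j+1}(x) + e`, while the component moved to the end has
its charge raised by `e`, and `υ_ℓ(x + e) = υ_ℓ(x) + eℓ = υ_1(x) + e`. So the rotated Uglov set
is the old one shifted up by `e`. Shifting a β-set by `k` raises its charge by `k` and therefore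
leaves the partition read off by `β⁻¹` unchanged. -/

section Shift

lemma mem_shiftSet {B : Set ℤ} {k x : ℤ} : x ∈ shiftSet B k ↔ x - k ∈ B := by
  constructor
  · rintro ⟨y, hy, rfl⟩
    simpa using hy
  · exact fun h => ⟨x - k, h, sub_add_cancel x k⟩

lemma shiftSet_shiftSet (B : Set ℤ) (a b : ℤ) :
    shiftSet (shiftSet B a) b = shiftSet B (a + b) := by
  ext x
  simp only [mem_shiftSet, sub_sub, add_comm b a]

lemma shiftSet_zero (B : Set ℤ) : shiftSet B 0 = B := by
  ext x
  simp [mem_shiftSet]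

lemma ncard_shiftSet (B : Set ℤ) (k : ℤ) : (shiftSet B k).ncard = B.ncard :=
  Set.ncard_image_of_injective B (add_left_injective k)

lemma shiftSet_image {f g : ℤ → ℤ} {k : ℤ} (h : ∀ x, f x + k = g x) (S : Set ℤ) :
    shiftSet (f '' S) k = g '' S := by
  rw [shiftSet, Set.image_image]
  exact Set.image_congr' h

lemma shiftSet_iUnion {ι : Sort*} (B : ι → Set ℤ) (k : ℤ) :
    shiftSet (⋃ i, B i) k = ⋃ i, shiftSet (B i) k :=
  Set.image_iUnion

end Shift

section Charge

noncomputable def chargeFrom (a : ℤ) (B : Set ℤ) : ℤ :=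
  ((B ∩ Set.Ici a).ncard : ℤ) - ((Set.Iio a \ B).ncard : ℤ)

lemma charge_eq_chargeFrom_zero (B : Set ℤ) : charge B = chargeFrom 0 B := rfl

lemma chargeFrom_shiftSet (a k : ℤ) (B : Set ℤ) :
    chargeFrom a (shiftSet B k) = chargeFrom (a - k) B := by
  have hge : shiftSet B k ∩ Set.Ici a = shiftSet (B ∩ Set.Ici (a - k)) k := by
    ext x
    simp only [Set.mem_inter_iff, mem_shiftSet, Set.mem_Ici]
    exact and_congr_right fun _ => sub_le_sub_iff_right k |>.symm
  have hlt : Set.Iio a \ shiftSet B k = shiftSet (Set.Iio (a - k) \ B) k := by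
    ext x
    simp only [Set.mem_sdiff, mem_shiftSet, Set.mem_Iio]
    exact and_congr_left fun _ => sub_lt_sub_iff_right k |>.symm
  rw [chargeFrom, chargeFrom, hge, hlt, ncard_shiftSet, ncard_shiftSet]

variable {B : Set ℤ}

/-- Moving the base point past `a` trades `a` between the two counts, whether or not `a ∈ B`. -/
lemma chargeFrom_eq_chargeFrom_add_one (hB : BddAbove B) (hBc : BddBelow Bᶜ) (a : ℤ) :
    chargeFrom a B = chargeFrom (a + 1) B + 1 := by
  obtain ⟨M, hM⟩ := hB
  obtain ⟨m, hm⟩ := hBc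
  have hfinGe : (B ∩ Set.Ici (a + 1)).Finite :=
    (Set.finite_Icc (a + 1) M).subset fun x hx => ⟨hx.2, hM hx.1⟩
  have hfinLt : (Set.Iio a \ B).Finite :=
    (Set.finite_Ico m a).subset fun x hx => ⟨hm hx.2, hx.1⟩
  have hIci : Set.Ici a = insert a (Set.Ici (a + 1)) := by
    ext x
    simp only [Set.mem_Ici, Set.mem_insert_iff]
    omega
  have hIio : Set.Iio (a + 1) = insert a (Set.Iio a) := by
    ext x
    simp only [Set.mem_Iio, Set.mem_insert_iff]
    omega
  have haGe : a ∉ B ∩ Set.Ici (a + 1) := fun h => by simpa using h.2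
  have haLt : a ∉ Set.Iio a \ B := fun h => lt_irrefl a h.1
  rw [chargeFrom, chargeFrom, hIci, hIio]
  by_cases ha : a ∈ B
  · rw [Set.inter_insert_of_mem ha, Set.insert_sdiff_of_mem _ ha,
      Set.ncard_insert_of_notMem haGe hfinGe]
    push_cast
    ring
  · rw [Set.inter_insert_of_notMem ha, Set.insert_sdiff_of_notMem _ ha,
      Set.ncard_insert_of_notMem haLt hfinLt]
    push_cast
    ring

lemma chargeFrom_eq_sub (hB : BddAbove B) (hBc : BddBelow Bᶜ) (a : ℤ) :
    chargeFrom a B = chargeFrom 0 B - a := by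
  induction a using Int.induction_on with
  | zero => simp
  | succ n ih =>
    have := chargeFrom_eq_chargeFrom_add_one hB hBc n
    omega
  | pred n ih =>
    have := chargeFrom_eq_chargeFrom_add_one hB hBc (-n - 1)
    simp only [sub_add_cancel] at this
    omega

lemma charge_shiftSet (hB : BddAbove B) (hBc : BddBelow Bᶜ) (k : ℤ) :
    charge (shiftSet B k) = charge B + k := by
  rw [charge_eq_chargeFrom_zero, charge_eq_chargeFrom_zero, chargeFrom_shiftSet,
    chargeFrom_eq_sub hB hBc]
  ring

end Charge

section Beta

lemma betaOf_add (p : ℕ → ℕ) (c k : ℤ) : betaOf p (c + k) = shiftSet (betaOf p c) k := by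
  ext x
  simp only [betaOf, mem_shiftSet, Set.mem_ofPred_eq]
  exact exists_congr fun a => by constructor <;> intro h <;> linarith

variable {p : ℕ → ℕ}

lemma bddAbove_betaOf (hp : IsPartitionFun p) (c : ℤ) : BddAbove (betaOf p c) := by
  refine ⟨(p 0 : ℤ) + c, ?_⟩
  rintro x ⟨a, rfl⟩
  have := hp.1 0 a a.zero_le
  omega

lemma bddBelow_compl_betaOf (hp : IsPartitionFun p) (c : ℤ) : BddBelow (betaOf p c)ᶜ := by
  obtain ⟨N, hN⟩ := hp.2
  refine ⟨c - N, fun x hx => not_lt.1 fun hlt => hx ⟨(c - 1 - x).toNat, ?_⟩⟩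
  have hpos : ((c - 1 - x).toNat : ℤ) = c - 1 - x := Int.toNat_of_nonneg (by omega)
  have hzero : p (c - 1 - x).toNat = 0 := hN _ (by omega)
  omega

lemma betaOf_charge_shiftSet (hp : IsPartitionFun p) {B : Set ℤ}
    (hB : betaOf p (charge B) = B) (k : ℤ) :
    betaOf p (charge (shiftSet B k)) = shiftSet B k := by
  rw [charge_shiftSet (hB ▸ bddAbove_betaOf hp _) (hB ▸ bddBelow_compl_betaOf hp _),
    betaOf_add, hB]

lemma betaInv_shiftSet (B : Set ℤ) (k : ℤ) : betaInv (shiftSet B k) = betaInv B := by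
  have key : (fun p => IsPartitionFun p ∧ betaOf p (charge (shiftSet B k)) = shiftSet B k) =
      fun p => IsPartitionFun p ∧ betaOf p (charge B) = B := funext fun p => propext
    ⟨fun ⟨hp, h⟩ => ⟨hp, by
      simpa [shiftSet_shiftSet, shiftSet_zero] using betaOf_charge_shiftSet hp h (-k)⟩,
     fun ⟨hp, h⟩ => ⟨hp, betaOf_charge_shiftSet hp h k⟩⟩
  rw [betaInv, betaInv, key]

end Beta

section Uglov

lemma finRotate_eq_dite {ℓ : ℕ} (j : Fin ℓ) :
    finRotate ℓ j = if h : j.1 + 1 < ℓ then ⟨j.1 + 1, h⟩ else ⟨0, j.pos⟩ := by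
  obtain ⟨n, rfl⟩ : ∃ n, ℓ = n + 1 := ⟨ℓ - 1, by have := j.pos; omega⟩
  obtain ⟨j, hj⟩ := j
  dsimp only
  split_ifs with h
  · exact finRotate_of_lt (by omega)
  · obtain rfl : j = n := by omega
    exact finRotate_last'

lemma upsilon_add_self (e ℓ j : ℕ) (x : ℤ) :
    upsilon e ℓ j (x + e) = upsilon e ℓ j x + e * ℓ := by
  simp only [upsilon, Int.add_emod_right]
  ring

lemma upsilon_sub_upsilon (e ℓ i j : ℕ) (x : ℤ) :
    upsilon e ℓ i x - upsilon e ℓ j x = ((j : ℤ) - i) * e := by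
  simp only [upsilon]
  ring

lemma uglovU_rotate {e ℓ : ℕ} (hℓ : 0 < ℓ) (B : Fin ℓ → Set ℤ) :
    uglovU e ℓ (fun j => if h : j.1 + 1 < ℓ then B ⟨j.1 + 1, h⟩ else shiftSet (B ⟨0, hℓ⟩) e) =
      shiftSet (uglovU e ℓ B) e := by
  rw [uglovU, uglovU, shiftSet_iUnion]
  conv_rhs => rw [← (finRotate ℓ).surjective.iUnion_comp]
  refine Set.iUnion_congr fun j => ?_
  rw [finRotate_eq_dite]
  split_ifs with h
  · refine (shiftSet_image (fun x => ?_) _).symm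
    have := upsilon_sub_upsilon e ℓ (j.1 + 1 + 1) (j.1 + 1) x
    push_cast at this ⊢
    linear_combination this
  · rw [shiftSet, shiftSet, Set.image_image, Set.image_image]
    refine Set.image_congr' fun x => ?_
    have hj : (j.1 : ℤ) + 1 = ℓ := by omega
    have := upsilon_sub_upsilon e ℓ (j.1 + 1) 1 x
    rw [upsilon_add_self]
    push_cast at this ⊢
    linear_combination this - (e : ℤ) * hj

end Uglov

/-- U((λ^{(2)}, …, λ^{(ℓ)}, λ^{(1)}); (t_2, …, t_ℓ, t_1 + e)) = U(λ; t). -/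
theorem stmt9 (e ℓ : ℕ) (hl : 2 ≤ ℓ) (Λ : Fin ℓ → ℕ → ℕ) (t : Fin ℓ → ℤ) :
    uglovPart e ℓ
      (fun j => if h : j.1 + 1 < ℓ then Λ ⟨j.1 + 1, h⟩ else Λ ⟨0, by omega⟩)
      (fun j => if h : j.1 + 1 < ℓ then t ⟨j.1 + 1, h⟩ else t ⟨0, by omega⟩ + (e : ℤ)) =
    uglovPart e ℓ Λ t := by
  have hrot : uglovMulti e ℓ
      (fun j => if h : j.1 + 1 < ℓ then Λ ⟨j.1 + 1, h⟩ else Λ ⟨0, by omega⟩)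
      (fun j => if h : j.1 + 1 < ℓ then t ⟨j.1 + 1, h⟩ else t ⟨0, by omega⟩ + (e : ℤ)) =
      shiftSet (uglovMulti e ℓ Λ t) e := by
    rw [uglovMulti, uglovMulti, ← uglovU_rotate (by omega)]
    congr 1
    funext j
    split_ifs
    exacts [rfl, betaOf_add _ _ _]
  rw [uglovPart, uglovPart, hrot, betaInv_shiftSet]
end

section
/- Assume ℓ ≥ 2. Let λ be an ℓ-partition and t = (t_1, …, t_ℓ) ∈ ℤ^ℓ a multicharge. Then wt_e(λ; (t_1 + 1, t_2 + 1, …, t_ℓ + 1)) = wt_e(λ; t). -/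
/-!
Raising every charge by one translates each β-set `β_{t_j}(λ^{(j)})` by one. Since `υ_j` maps
the `e`-residue classes to themselves, this cycles the components of the `e`-quotient of the Uglov
set: component `i` becomes component `i + 1`, and component `e - 1` wraps around to component `0`,
translated by `ℓ`. The weight is a sum over the components of inversion counts, which are
invariant under translation.
-/

theorem Int.mul_add_eq_mul_add_iff {e a b r s : ℤ} (hr₀ : 0 ≤ r) (hr : r < e) (hs₀ : 0 ≤ s)
    (hs : s < e) : a * e + r = b * e + s ↔ a = b ∧ r = s := by
  have divMod : ∀ {q u : ℤ}, 0 ≤ u → u < e → (q * e + u) / e = q ∧ (q * e + u) % e = u :=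
    fun hu₀ hu => (Int.ediv_emod_unique (by omega)).2 ⟨by ring, hu₀, hu⟩
  refine ⟨fun h => ?_, fun ⟨hab, hrs⟩ => hab ▸ hrs ▸ rfl⟩
  have hab := divMod (q := a) hr₀ hr
  rw [h, (divMod hs₀ hs).1, (divMod hs₀ hs).2] at hab
  exact ⟨hab.1.symm, hab.2.symm⟩

noncomputable def invCount (C : Set ℤ) : ℕ :=
  {p : ℤ × ℤ | p.1 ∈ C ∧ p.2 ∉ C ∧ p.2 < p.1}.ncard

theorem wtSet_eq_sum_invCount (e : ℕ) (B : Set ℤ) :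
    wtSet e B = ∑ i ∈ Finset.range e, invCount (quotComp e B i) :=
  rfl

theorem invCount_shiftSet (C : Set ℤ) (k : ℤ) : invCount (shiftSet C k) = invCount C := by
  have hpairs : {p : ℤ × ℤ | p.1 ∈ shiftSet C k ∧ p.2 ∉ shiftSet C k ∧ p.2 < p.1} =
      (· + (k, k)) '' {p : ℤ × ℤ | p.1 ∈ C ∧ p.2 ∉ C ∧ p.2 < p.1} := by
    ext ⟨x, y⟩
    simp only [shiftSet, Set.image_add_right, Set.mem_preimage, Set.mem_ofPred_eq,
      Prod.fst_add, Prod.snd_add, Prod.fst_neg, Prod.snd_neg]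
    rw [add_lt_add_iff_right]
  rw [invCount, invCount, hpairs, Set.ncard_image_of_injective _ (add_left_injective _)]

theorem betaOf_add_one (p : ℕ → ℕ) (t : ℤ) : betaOf p (t + 1) = shiftSet (betaOf p t) 1 := by
  ext x
  simp only [betaOf, shiftSet, Set.mem_ofPred_eq, Set.mem_image]
  constructor
  · rintro ⟨a, rfl⟩
    exact ⟨_, ⟨a, rfl⟩, by ring⟩
  · rintro ⟨y, ⟨a, rfl⟩, rfl⟩
    exact ⟨a, by ring⟩

theorem quotComp_shiftSet_one_succ (e : ℕ) (B : Set ℤ) (i : ℕ) :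
    quotComp e (shiftSet B 1) (i + 1) = quotComp e B i := by
  ext a
  simp only [quotComp, shiftSet, Set.image_add_right, Set.mem_ofPred_eq, Set.mem_preimage]
  push_cast
  ring_nf

theorem quotComp_shiftSet_one_zero {e : ℕ} (he : 0 < e) (B : Set ℤ) :
    quotComp e (shiftSet B 1) 0 = shiftSet (quotComp e B (e - 1)) 1 := by
  ext a
  simp only [quotComp, shiftSet, Set.image_add_right, Set.mem_ofPred_eq, Set.mem_preimage]
  push_cast [Nat.one_le_iff_ne_zero.2 he.ne']
  ring_nf

theorem upsilon_mul_add {e : ℕ} (ℓ j : ℕ) {c r : ℤ} (hr₀ : 0 ≤ r) (hr : r < e) :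
    upsilon e ℓ j (c * e + r) = (c * ℓ + (ℓ - j)) * e + r := by
  have hmod : (c * e + r) % e = r := by
    rw [add_comm, Int.add_mul_emod_self_right, Int.emod_eq_of_lt hr₀ hr]
  rw [upsilon, hmod]
  ring

theorem quotComp_uglovU {e : ℕ} (ℓ : ℕ) (B : Fin ℓ → Set ℤ) {i : ℕ} (hi : i < e) :
    quotComp e (uglovU e ℓ B) i =
      ⋃ j : Fin ℓ, (fun c : ℤ => c * ℓ + ((ℓ : ℤ) - (j.1 + 1 : ℕ))) '' quotComp e (B j) i := by
  have he : (0 : ℤ) < e := by omega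
  have hi' : (i : ℤ) < e := by exact_mod_cast hi
  ext a
  simp only [quotComp, uglovU, Set.mem_iUnion, Set.mem_image, Set.mem_ofPred_eq]
  refine exists_congr fun j => ⟨?_, ?_⟩
  · rintro ⟨x, hx, hxa⟩
    obtain ⟨c, r, hr₀, hr, rfl⟩ : ∃ c r : ℤ, 0 ≤ r ∧ r < e ∧ x = c * e + r :=
      ⟨x / e, x % e, Int.emod_nonneg _ he.ne', Int.emod_lt_of_pos _ he,
        (Int.ediv_mul_add_emod _ _).symm⟩
    rw [upsilon_mul_add ℓ _ hr₀ hr, Int.mul_add_eq_mul_add_iff hr₀ hr (by positivity) hi'] at hxa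
    obtain ⟨rfl, rfl⟩ := hxa
    exact ⟨c, hx, rfl⟩
  · rintro ⟨c, hc, rfl⟩
    exact ⟨_, hc, upsilon_mul_add ℓ _ (by positivity) hi'⟩

theorem quotComp_uglovU_shiftSet_one_succ {e : ℕ} (ℓ : ℕ) (B : Fin ℓ → Set ℤ) {i : ℕ}
    (hi : i + 1 < e) :
    quotComp e (uglovU e ℓ fun j => shiftSet (B j) 1) (i + 1) = quotComp e (uglovU e ℓ B) i := by
  simp only [quotComp_uglovU ℓ _ hi, quotComp_uglovU ℓ _ (Nat.lt_of_succ_lt hi),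
    quotComp_shiftSet_one_succ]

theorem quotComp_uglovU_shiftSet_one_zero {e : ℕ} (he : 0 < e) (ℓ : ℕ) (B : Fin ℓ → Set ℤ) :
    quotComp e (uglovU e ℓ fun j => shiftSet (B j) 1) 0 =
      shiftSet (quotComp e (uglovU e ℓ B) (e - 1)) ℓ := by
  rw [quotComp_uglovU ℓ _ he, quotComp_uglovU ℓ _ (Nat.sub_lt he one_pos), shiftSet,
    Set.image_iUnion]
  refine Set.iUnion_congr fun j => ?_
  rw [quotComp_shiftSet_one_zero he, shiftSet, Set.image_image, Set.image_image]
  exact Set.image_congr fun c _ => by ring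

theorem uglovMulti_add_one (e ℓ : ℕ) (Λ : Fin ℓ → ℕ → ℕ) (t : Fin ℓ → ℤ) :
    uglovMulti e ℓ Λ (fun j => t j + 1) =
      uglovU e ℓ fun j => shiftSet (betaOf (Λ j) (t j)) 1 := by
  simp only [uglovMulti, betaOf_add_one]

theorem stmt13_general (e ℓ : ℕ) (he : 2 ≤ e) (Λ : Fin ℓ → ℕ → ℕ) (t : Fin ℓ → ℤ) :
    wtPart e ℓ Λ (fun j => t j + 1) = wtPart e ℓ Λ t := by
  obtain ⟨m, rfl⟩ : ∃ m, e = m + 1 := ⟨e - 1, by omega⟩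
  rw [wtPart, wtPart, wtSet_eq_sum_invCount, wtSet_eq_sum_invCount, uglovMulti_add_one,
    uglovMulti, Finset.sum_range_succ', Finset.sum_range_succ,
    quotComp_uglovU_shiftSet_one_zero m.add_one_pos, invCount_shiftSet, Nat.add_sub_cancel]
  congr 1
  refine Finset.sum_congr rfl fun i hi => ?_
  rw [quotComp_uglovU_shiftSet_one_succ ℓ _ (by simpa using hi)]

/-- wt_e(λ; (t_1 + 1, …, t_ℓ + 1)) = wt_e(λ; t). -/
theorem stmt13 (e ℓ : ℕ) (he : 2 ≤ e) (hl : 2 ≤ ℓ) (Λ : Fin ℓ → ℕ → ℕ)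
    (hΛ : ∀ j, IsPartitionFun (Λ j)) (t : Fin ℓ → ℤ) :
    wtPart e ℓ Λ (fun j => t j + 1) = wtPart e ℓ Λ t :=
  stmt13_general e ℓ he Λ t
end
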